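/- Let G be an infinite, connected, locally finite simplicial graph with vertex set V, fix v₀ ∈ V, and let B_n be the closed ball of radius n about v₀. Then for every g : V → ℝ and every n ∈ ℕ there exists f : V → ℝ supported in B_n such that Δ_G(f)(v) = g(v) for all v ∈ B_n. -/

import Mathlib

/-! A function supported in the finite ball `B_n` whose Laplacian vanishes on `B_n` is zero, by
the maximum principle: a positive maximum, attained in `B_n`, spreads along edges and so, by
connectedness, reaches a vertex outside `B_n`, which exists because the graph is infinite and
where the function vanishes. Hence the truncated Laplacian, an endomorphism of the
finite-dimensional space `B_n → ℝ`, is injective and therefore surjective. -/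

open SimpleGraph

noncomputable def lap {V : Type*} (G : SimpleGraph V) [G.LocallyFinite] (f : V → ℝ) (v : V) : ℝ :=
  f v - (1 / (G.degree v : ℝ)) * ∑ w ∈ G.neighborFinset v, f w

namespace SimpleGraph

variable {V : Type*} {G : SimpleGraph V}

lemma exists_adj_dist_le_of_dist_eq_succ {u v : V} {n : ℕ} (h : G.dist u v = n + 1) :
    ∃ w, G.Adj w v ∧ G.dist u w ≤ n := by
  obtain ⟨p, hp⟩ := exists_walk_of_dist_ne_zero (show G.dist u v ≠ 0 by omega)
  have hnil : ¬ p.Nil := by rw [← Walk.length_eq_zero_iff]; omega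
  refine ⟨p.penultimate, p.adj_penultimate hnil, ?_⟩
  calc G.dist u p.penultimate ≤ p.dropLast.length := dist_le _
    _ = n := by rw [Walk.length_dropLast]; omega

lemma Connected.finite_setOf_dist_le [G.LocallyFinite] (hconn : G.Connected) (u : V) (n : ℕ) :
    {v | G.dist u v ≤ n}.Finite := by
  induction n with
  | zero =>
    exact (Set.finite_singleton u).subset fun v hv =>
      (hconn.dist_eq_zero_iff.mp (Nat.le_zero.mp hv)).symm
  | succ n ih =>
    refine (ih.union (ih.biUnion fun w _ => (G.neighborSet w).toFinite)).subset fun v hv => ?_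
    rcases Nat.le_succ_iff.mp hv with hle | heq
    · exact Or.inl hle
    · obtain ⟨w, hwv, hw⟩ := exists_adj_dist_le_of_dist_eq_succ heq
      exact Or.inr (Set.mem_biUnion hw hwv)

lemma Reachable.of_adj_closed {P : V → Prop} (hP : ∀ u w, G.Adj u w → P u → P w) {u v : V}
    (huv : G.Reachable u v) (hu : P u) : P v := by
  obtain ⟨p⟩ := huv
  induction p with
  | nil => exact hu
  | cons h _ ih => exact ih (hP _ _ h hu)

end SimpleGraph

section Laplacian

variable {V : Type*} {G : SimpleGraph V} [G.LocallyFinite]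

variable (G) in
noncomputable def lapLinearMap : (V → ℝ) →ₗ[ℝ] (V → ℝ) where
  toFun := lap G
  map_add' f g := funext fun v => by
    simp only [lap, Pi.add_apply, Finset.sum_add_distrib]
    ring
  map_smul' c f := funext fun v => by
    simp only [lap, Pi.smul_apply, smul_eq_mul, ← Finset.mul_sum, RingHom.id_apply]
    ring

variable (G) in
/-- The truncated operator `u_n` of the paper is `truncatedLap G B_n`. -/
noncomputable def truncatedLap (S : Finset V) : (S → ℝ) →ₗ[ℝ] (S → ℝ) :=
  LinearMap.funLeft ℝ ℝ ((↑) : S → V) ∘ₗ lapLinearMap G ∘ₗ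
    Function.ExtendByZero.linearMap ℝ ((↑) : S → V)

lemma extend_coe_finset_apply_of_notMem {S : Finset V} (f : S → ℝ) {v : V} (hv : v ∉ S) :
    Function.extend ((↑) : S → V) f 0 v = 0 :=
  Function.extend_apply' _ _ _ fun ⟨x, hx⟩ => hv (hx ▸ x.2)

lemma eq_of_adj_of_lap_nonpos {F : V → ℝ} {M : ℝ} (hle : ∀ v, F v ≤ M) {u w : V}
    (hu : F u = M) (hlap : lap G F u ≤ 0) (huw : G.Adj u w) : F w = M := by
  by_contra hw
  have hdeg : (0 : ℝ) < G.degree u :=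
    Nat.cast_pos.mpr ((G.degree_pos_iff_exists_adj u).mpr ⟨w, huw⟩)
  have hsum : ∑ x ∈ G.neighborFinset u, F x < G.degree u * M :=
    calc ∑ x ∈ G.neighborFinset u, F x < ∑ _x ∈ G.neighborFinset u, M :=
          Finset.sum_lt_sum (fun x _ => hle x)
            ⟨w, (G.mem_neighborFinset u w).mpr huw, (hle w).lt_of_ne hw⟩
      _ = G.degree u * M := by simp
  rw [lap, hu, sub_nonpos, one_div, le_inv_mul_iff₀ hdeg] at hlap
  linarith

variable [Infinite V]

theorem nonpos_of_lap_nonpos (hconn : G.Connected) {S : Finset V} {F : V → ℝ}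
    (hsupp : ∀ v ∉ S, F v = 0) (hlap : ∀ v ∈ S, lap G F v ≤ 0) (v : V) : F v ≤ 0 := by
  by_contra! hv
  have mem_of_ne_zero : ∀ x, F x ≠ 0 → x ∈ S := fun x => not_imp_comm.mp (hsupp x)
  obtain ⟨u, huS, hmax⟩ := S.exists_max_image F ⟨v, mem_of_ne_zero v hv.ne'⟩
  have hpos : 0 < F u := hv.trans_le (hmax v (mem_of_ne_zero v hv.ne'))
  have hle : ∀ x, F x ≤ F u := fun x => by
    by_cases hx : x ∈ S
    · exact hmax x hx
    · exact (hsupp x hx).trans_le hpos.le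
  have hclosed : ∀ x y, G.Adj x y → F x = F u → F y = F u := fun x y hxy hx =>
    eq_of_adj_of_lap_nonpos hle hx (hlap x (mem_of_ne_zero x (hx ▸ hpos.ne'))) hxy
  obtain ⟨w, hw⟩ := Infinite.exists_notMem_finset S
  have hFw : F w = F u := (hconn u w).of_adj_closed hclosed rfl
  linarith [hsupp w hw]

theorem eq_zero_of_lap_eq_zero (hconn : G.Connected) {S : Finset V} {F : V → ℝ}
    (hsupp : ∀ v ∉ S, F v = 0) (hlap : ∀ v ∈ S, lap G F v = 0) : F = 0 := by
  have hlap_neg : ∀ v ∈ S, lap G (-F) v ≤ 0 := fun v hv => by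
    rw [show lap G (-F) v = -lap G F v from congrFun (map_neg (lapLinearMap G) F) v, hlap v hv,
      neg_zero]
  funext v
  exact le_antisymm (nonpos_of_lap_nonpos hconn hsupp (fun v hv => (hlap v hv).le) v)
    (neg_nonpos.mp (nonpos_of_lap_nonpos hconn (by simpa using hsupp) hlap_neg v))

theorem truncatedLap_injective (hconn : G.Connected) (S : Finset V) :
    Function.Injective (truncatedLap G S) := by
  rw [← LinearMap.ker_eq_bot, LinearMap.ker_eq_bot']
  intro f hf
  have hzero : Function.extend ((↑) : S → V) f 0 = 0 :=
    eq_zero_of_lap_eq_zero hconn (fun v hv => extend_coe_finset_apply_of_notMem f hv)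
      fun v hv => congrFun hf ⟨v, hv⟩
  funext x
  simpa [Subtype.val_injective.extend_apply] using congrFun hzero x

theorem exists_lap_eq_on_finset (hconn : G.Connected) (S : Finset V) (g : V → ℝ) :
    ∃ f : V → ℝ, (∀ v ∉ S, f v = 0) ∧ ∀ v ∈ S, lap G f v = g v := by
  obtain ⟨f, hf⟩ :=
    LinearMap.injective_iff_surjective.mp (truncatedLap_injective hconn S) fun v => g v
  exact ⟨Function.extend ((↑) : S → V) f 0,
    fun v hv => extend_coe_finset_apply_of_notMem f hv, fun v hv => congrFun hf ⟨v, hv⟩⟩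

end Laplacian

theorem stmt10 {V : Type*} [Infinite V] (G : SimpleGraph V) [G.LocallyFinite]
    (hconn : G.Connected) (v₀ : V) (g : V → ℝ) (n : ℕ) :
    ∃ f : V → ℝ, (∀ v, f v ≠ 0 → G.dist v₀ v ≤ n) ∧
      ∀ v, G.dist v₀ v ≤ n → lap G f v = g v := by
  set B := (hconn.finite_setOf_dist_le v₀ n).toFinset
  have hB : ∀ v, v ∈ B ↔ G.dist v₀ v ≤ n := fun v => Set.Finite.mem_toFinset _
  obtain ⟨f, hsupp, hf⟩ := exists_lap_eq_on_finset hconn B g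
  exact ⟨f, fun v hv => (hB v).mp (not_imp_comm.mp (hsupp v) hv),
    fun v hv => hf v ((hB v).mpr hv)⟩
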